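/- arXiv:1910.02263 — 2 statements merged into one kernel-verified Lean document; each statement's English description precedes it below -/
import Mathlib

section
/- For positive elements a, b of a unital C*-algebra A, numerical radius Birkhoff–James orthogonality a ⊥_B^v b holds if and only if Birkhoff–James orthogonality a ⊥_B b holds. -/
/-!
A unital functional of norm one is positive: it is real on self-adjoint `x` because
`|φ x + i n| ≤ ‖x + i n‖ ≤ √(‖x‖² + n²)` for all real `n`, and for `x ≥ 0` the bound
`‖‖x‖ - x‖ ≤ ‖x‖` puts `φ x` in the disc of radius `‖x‖` about `‖x‖`.
If `‖x‖ ∈ σ(x)` then `‖1 + x‖ = 1 + ‖x‖`, so a Hahn–Banach functional norming `1 + x` must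
norm `1` and `x` separately, i.e. it is a state with `φ x = ‖x‖`. Hence the numerical radius
equals the norm on self-adjoint elements, which gives one implication at once. For the other,
states are real on `a` and `b`, so `|φ (a + (re λ) b)| = |re φ (a + λ b)| ≤ v(a + λ b)`, whence
`‖a‖ ≤ ‖a + (re λ) b‖ = v(a + (re λ) b) ≤ v(a + λ b)`.
-/

open scoped ComplexOrder

/-- A state on a unital C*-algebra: a positive linear functional with `φ 1 = 1` and norm 1. -/
def IsState (A : Type*) [CStarAlgebra A] (φ : A →L[ℂ] ℂ) : Prop :=
  (∀ a : A, 0 ≤ φ (star a * a)) ∧ φ 1 = 1 ∧ ‖φ‖ = 1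

/-- The numerical radius `v(a) = sup {|φ(a)| : φ a state}`. -/
noncomputable def nr {A : Type*} [CStarAlgebra A] (a : A) : ℝ :=
  sSup {r : ℝ | ∃ φ : A →L[ℂ] ℂ, IsState A φ ∧ r = ‖φ a‖}

/-- The numerical radius Crawford number `C(b) = inf {|φ(b)| : φ a state}`. -/
noncomputable def crawford {A : Type*} [CStarAlgebra A] (b : A) : ℝ :=
  sInf {r : ℝ | ∃ φ : A →L[ℂ] ℂ, IsState A φ ∧ r = ‖φ b‖}

/-- Numerical radius Birkhoff--James orthogonality: `v(a + λ b) ≥ v(a)` for all `λ ∈ ℂ`. -/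
def nrOrth {A : Type*} [CStarAlgebra A] (a b : A) : Prop :=
  ∀ lam : ℂ, nr a ≤ nr (a + lam • b)

/-- Birkhoff--James orthogonality: `‖a + λ b‖ ≥ ‖a‖` for all `λ ∈ ℂ`. -/
def bjOrth {A : Type*} [CStarAlgebra A] (a b : A) : Prop :=
  ∀ lam : ℂ, ‖a‖ ≤ ‖a + lam • b‖

variable {A : Type*} [CStarAlgebra A]

lemma Complex.eq_ofReal_of_norm_le_of_le_re {z : ℂ} {r : ℝ} (hz : ‖z‖ ≤ r) (hr : r ≤ z.re) :
    z = r := by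
  have hre : z.re = ‖z‖ := le_antisymm (z.re_le_norm) (hz.trans hr)
  rw [Complex.eq_re_of_ofReal_le (Complex.re_eq_norm.1 hre)]
  exact congrArg _ (le_antisymm (by linarith [z.re_le_norm]) hr)

lemma ContinuousLinearMap.apply_eq_norm_of_apply_add_eq {E : Type*} [SeminormedAddCommGroup E]
    [NormedSpace ℂ E] {φ : StrongDual ℂ E} (hφ : ‖φ‖ ≤ 1) {u v : E}
    (h : φ (u + v) = ‖u‖ + ‖v‖) : φ u = ‖u‖ ∧ φ v = ‖v‖ := by
  have hle (w : E) : ‖φ w‖ ≤ ‖w‖ := φ.le_of_opNorm_le hφ w |>.trans_eq (one_mul _)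
  have hsum : (φ u).re + (φ v).re = ‖u‖ + ‖v‖ := by
    simpa using congrArg Complex.re h
  have hu := (φ u).re_le_norm.trans (hle u)
  have hv := (φ v).re_le_norm.trans (hle v)
  exact ⟨Complex.eq_ofReal_of_norm_le_of_le_re (hle u) (by linarith),
    Complex.eq_ofReal_of_norm_le_of_le_re (hle v) (by linarith)⟩

lemma eq_zero_of_forall_add_sq_le {c K : ℝ} (h : ∀ n : ℝ, (c + n) ^ 2 ≤ K + n ^ 2) : c = 0 := by
  by_contra hc
  have hn := h (K / (2 * c))
  have hK : 2 * c * (K / (2 * c)) = K := by field_simp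
  nlinarith [sq_pos_of_ne_zero hc]

lemma IsSelfAdjoint.norm_add_smul_I_sq_le [Nontrivial A] {x : A} (hx : IsSelfAdjoint x)
    (n : ℝ) : ‖x + (n * Complex.I) • (1 : A)‖ ^ 2 ≤ ‖x‖ ^ 2 + n ^ 2 := by
  have hstar : star (x + (n * Complex.I) • (1 : A)) * (x + (n * Complex.I) • (1 : A))
      = x * x + ((n : ℂ) ^ 2) • (1 : A) := by
    have hconj : star ((n : ℂ) * Complex.I) = -(n * Complex.I) := by simp
    have hsq : -(n * Complex.I * (n * Complex.I)) = (n : ℂ) ^ 2 := by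
      ring_nf; simp [Complex.I_sq]
    rw [star_add, star_smul, hx.star_eq, star_one, hconj, ← hsq]
    simp only [add_mul, mul_add, smul_mul_assoc, mul_smul_comm, mul_one, one_mul]
    module
  calc ‖x + (n * Complex.I) • (1 : A)‖ ^ 2
      = ‖x * x + ((n : ℂ) ^ 2) • (1 : A)‖ := by rw [← hstar, CStarRing.norm_star_mul_self, sq]
    _ ≤ ‖x * x‖ + ‖((n : ℂ) ^ 2) • (1 : A)‖ := norm_add_le _ _
    _ ≤ ‖x‖ ^ 2 + n ^ 2 := by
      rw [norm_smul, norm_one, mul_one, norm_pow, Complex.norm_real, Real.norm_eq_abs, sq_abs]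
      gcongr
      exact (norm_mul_le x x).trans_eq (sq ‖x‖).symm

lemma ContinuousLinearMap.im_apply_eq_zero_of_isSelfAdjoint [Nontrivial A] {φ : A →L[ℂ] ℂ}
    (hφ1 : φ 1 = 1) (hφ : ‖φ‖ ≤ 1) {x : A} (hx : IsSelfAdjoint x) : (φ x).im = 0 := by
  refine eq_zero_of_forall_add_sq_le (K := ‖x‖ ^ 2) fun n => ?_
  have happly : φ (x + (n * Complex.I) • (1 : A)) = φ x + n * Complex.I := by
    simp [hφ1]
  have him : (φ x).im + n = (φ (x + (n * Complex.I) • (1 : A))).im := by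
    simp [happly]
  calc ((φ x).im + n) ^ 2 ≤ ‖φ (x + (n * Complex.I) • (1 : A))‖ ^ 2 := by
        rw [him, ← sq_abs]; gcongr; exact Complex.abs_im_le_norm _
    _ ≤ ‖x + (n * Complex.I) • (1 : A)‖ ^ 2 := by
        gcongr; exact φ.le_of_opNorm_le hφ _ |>.trans_eq (one_mul _)
    _ ≤ ‖x‖ ^ 2 + n ^ 2 := hx.norm_add_smul_I_sq_le n

lemma norm_algebraMap_norm_sub_le [PartialOrder A] [StarOrderedRing A] {x : A} (hx : 0 ≤ x) :
    ‖algebraMap ℝ A ‖x‖ - x‖ ≤ ‖x‖ :=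
  (CStarAlgebra.norm_le_iff_le_algebraMap _ (norm_nonneg x)
    (sub_nonneg.2 (IsSelfAdjoint.of_nonneg hx).le_algebraMap_norm_self)).2 (sub_le_self _ hx)

lemma ContinuousLinearMap.apply_nonneg_of_nonneg [Nontrivial A] [PartialOrder A] [StarOrderedRing A]
    {φ : A →L[ℂ] ℂ} (hφ1 : φ 1 = 1) (hφ : ‖φ‖ ≤ 1) {x : A} (hx : 0 ≤ x) : 0 ≤ φ x := by
  have him := φ.im_apply_eq_zero_of_isSelfAdjoint hφ1 hφ (IsSelfAdjoint.of_nonneg hx)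
  have hdist : ‖(‖x‖ : ℂ) - φ x‖ ≤ ‖x‖ := by
    have happly : φ (algebraMap ℝ A ‖x‖ - x) = ‖x‖ - φ x := by
      simp [Algebra.algebraMap_eq_smul_one, hφ1]
    rw [← happly]
    exact (φ.le_of_opNorm_le hφ _).trans ((one_mul _).trans_le (norm_algebraMap_norm_sub_le hx))
  have hre : 0 ≤ (φ x).re := by
    have := (Complex.abs_re_le_norm _).trans hdist
    rw [Complex.sub_re, Complex.ofReal_re, abs_le] at this
    linarith
  exact Complex.le_def.2 ⟨hre, him.symm⟩

lemma isState_of_apply_one_of_norm_eq_one [Nontrivial A] {φ : A →L[ℂ] ℂ} (hφ1 : φ 1 = 1)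
    (hφ : ‖φ‖ = 1) : IsState A φ := by
  let := CStarAlgebra.spectralOrder A
  have := CStarAlgebra.spectralOrderedRing A
  exact ⟨fun a => φ.apply_nonneg_of_nonneg hφ1 hφ.le (star_mul_self_nonneg a), hφ1, hφ⟩

lemma exists_isState_apply_eq_norm [Nontrivial A] {x : A} (hx : ‖x‖ ∈ spectrum ℝ x) :
    ∃ φ : A →L[ℂ] ℂ, IsState A φ ∧ φ x = ‖x‖ := by
  have hnorm : ‖(1 : A) + x‖ = ‖(1 : A)‖ + ‖x‖ := by
    refine le_antisymm (norm_add_le _ _) ?_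
    have hmem : 1 + ‖x‖ ∈ spectrum ℝ ((1 : A) + x) := by
      rw [← map_one (algebraMap ℝ A), ← spectrum.singleton_add_eq]
      exact Set.add_mem_add rfl hx
    rw [norm_one]
    exact (Real.le_norm_self _).trans (spectrum.norm_le_norm_of_mem hmem)
  obtain ⟨φ, hφ, hφx⟩ := exists_dual_vector' ℂ ((1 : A) + x)
  obtain ⟨hφ1, hφx⟩ :=
    φ.apply_eq_norm_of_apply_add_eq hφ.le (by rw [hφx, hnorm]; push_cast; rfl)
  rw [norm_one, Complex.ofReal_one] at hφ1
  exact ⟨φ, isState_of_apply_one_of_norm_eq_one hφ1 hφ, hφx⟩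

lemma IsSelfAdjoint.exists_isState_norm_apply_eq [Nontrivial A] {x : A} (hx : IsSelfAdjoint x) :
    ∃ φ : A →L[ℂ] ℂ, IsState A φ ∧ ‖φ x‖ = ‖x‖ := by
  rcases CStarAlgebra.norm_or_neg_norm_mem_spectrum hx with hmem | hmem
  · obtain ⟨φ, hφ, hφx⟩ := exists_isState_apply_eq_norm hmem
    exact ⟨φ, hφ, by simp [hφx]⟩
  · have hneg : ‖-x‖ ∈ spectrum ℝ (-x) := by
      rw [norm_neg, ← spectrum.neg_eq, ← neg_neg ‖x‖]
      exact Set.neg_mem_neg.2 hmem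
    obtain ⟨φ, hφ, hφx⟩ := exists_isState_apply_eq_norm hneg
    exact ⟨φ, hφ, by simpa using congrArg norm hφx⟩

lemma IsState.norm_apply_le {φ : A →L[ℂ] ℂ} (hφ : IsState A φ) (y : A) : ‖φ y‖ ≤ ‖y‖ :=
  φ.le_of_opNorm_le hφ.2.2.le y |>.trans_eq (one_mul _)

lemma nr_nonneg (y : A) : 0 ≤ nr y :=
  Real.sSup_nonneg fun _ ⟨_, _, hr⟩ => hr ▸ norm_nonneg _

lemma IsState.norm_apply_le_nr {φ : A →L[ℂ] ℂ} (hφ : IsState A φ) (y : A) : ‖φ y‖ ≤ nr y :=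
  le_csSup ⟨‖y‖, fun _ ⟨_, hψ, hr⟩ => hr ▸ hψ.norm_apply_le y⟩ ⟨φ, hφ, rfl⟩

lemma nr_le_of_forall_isState {y : A} {c : ℝ} (hc : 0 ≤ c)
    (h : ∀ φ : A →L[ℂ] ℂ, IsState A φ → ‖φ y‖ ≤ c) : nr y ≤ c :=
  Real.sSup_le (fun _ ⟨φ, hφ, hr⟩ => hr ▸ h φ hφ) hc

lemma nr_le_norm (y : A) : nr y ≤ ‖y‖ :=
  nr_le_of_forall_isState (norm_nonneg y) fun _ hφ => hφ.norm_apply_le y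

lemma IsSelfAdjoint.nr_eq_norm {x : A} (hx : IsSelfAdjoint x) : nr x = ‖x‖ := by
  refine le_antisymm (nr_le_norm x) ?_
  rcases subsingleton_or_nontrivial A with _ | _
  · rw [Subsingleton.elim x 0, norm_zero]
    exact nr_nonneg 0
  · obtain ⟨φ, hφ, hφx⟩ := hx.exists_isState_norm_apply_eq
    exact hφx ▸ hφ.norm_apply_le_nr x

lemma IsState.apply_im_eq_zero {φ : A →L[ℂ] ℂ} (hφ : IsState A φ) {x : A}
    (hx : IsSelfAdjoint x) : (φ x).im = 0 := by
  have : Nontrivial A := ⟨⟨1, 0, fun h => by simpa [h] using hφ.2.1⟩⟩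
  exact φ.im_apply_eq_zero_of_isSelfAdjoint hφ.2.1 hφ.2.2.le hx

lemma nr_add_re_smul_le {a b : A} (ha : IsSelfAdjoint a) (hb : IsSelfAdjoint b) (lam : ℂ) :
    nr (a + (lam.re : ℂ) • b) ≤ nr (a + lam • b) := by
  refine nr_le_of_forall_isState (nr_nonneg _) fun φ hφ => ?_
  have hre : φ (a + (lam.re : ℂ) • b) = (φ (a + lam • b)).re := by
    apply Complex.ext <;>
      simp [hφ.apply_im_eq_zero ha, hφ.apply_im_eq_zero hb]
  calc ‖φ (a + (lam.re : ℂ) • b)‖ = |(φ (a + lam • b)).re| := by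
        rw [hre, Complex.norm_real, Real.norm_eq_abs]
    _ ≤ ‖φ (a + lam • b)‖ := Complex.abs_re_le_norm _
    _ ≤ nr (a + lam • b) := hφ.norm_apply_le_nr _

theorem stmt10 (a b : A) (ha : ∃ c : A, a = star c * c) (hb : ∃ c : A, b = star c * c) :
    nrOrth a b ↔ bjOrth a b := by
  have ha : IsSelfAdjoint a := by obtain ⟨c, rfl⟩ := ha; exact .star_mul_self c
  have hb : IsSelfAdjoint b := by obtain ⟨c, rfl⟩ := hb; exact .star_mul_self c
  refine ⟨fun h lam => ?_, fun h lam => ?_⟩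
  · calc ‖a‖ = nr a := ha.nr_eq_norm.symm
      _ ≤ nr (a + lam • b) := h lam
      _ ≤ ‖a + lam • b‖ := nr_le_norm _
  · have hre : IsSelfAdjoint (lam.re : ℂ) := Complex.conj_ofReal lam.re
    calc nr a = ‖a‖ := ha.nr_eq_norm
      _ ≤ ‖a + (lam.re : ℂ) • b‖ := h _
      _ = nr (a + (lam.re : ℂ) • b) := (ha.add (hre.smul hb)).nr_eq_norm.symm
      _ ≤ nr (a + lam • b) := nr_add_re_smul_le ha hb lam
end

section
/- Let a, b be nonzero elements of a unital C*-algebra A. Then the left Gateaux derivative of the numerical radius norm satisfies ρ₋^v(a,b) = min{ Re(conj(φ(a))·φ(b)) : φ a state on A with |φ(a)| = v(a) }, and the minimum is attained. -/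
/-
The state space is weak-* compact, so `v(x)` is attained at a state for every `x`, and on the
compact set of states attaining `v(a)` the function `ψ ↦ Re (conj (ψ a) * ψ b)` has a minimiser
`φ`, with minimum `m`. For `t < 0`, testing `v(a + t b)` against `φ` bounds the difference quotient
above by `m`; testing it against a state `u t` attaining `v(a + t b)` bounds it below by
`Re (conj (u t a) * u t b) + t ‖b‖² / 2`. As `t → 0⁻` the states `u t` come to attain `v(a)`, so
by compactness this lower bound eventually exceeds any `c < m`.
Existence of states rests on the fact that a unital functional of norm one is positive.
-/

open scoped ComplexOrder

variable {A : Type*} [CStarAlgebra A]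

open Complex ComplexConjugate Filter Topology Set

lemma Complex.sq_norm_add_ofReal_mul (z w : ℂ) (t : ℝ) :
    ‖z + t * w‖ ^ 2 = ‖z‖ ^ 2 + 2 * t * (conj z * w).re + t ^ 2 * ‖w‖ ^ 2 := by
  simp only [Complex.sq_norm, normSq_apply, add_re, add_im, mul_re, mul_im, ofReal_re,
    ofReal_im, conj_re, conj_im]
  ring

lemma IsCompact.eventually_lt_of_tendsto {X Y β ι : Type*} [TopologicalSpace X]
    [TopologicalSpace Y] [T2Space Y] [LinearOrder β] [TopologicalSpace β] [ClosedIicTopology β]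
    {S : Set X} (hS : IsCompact S) {f : X → Y} {g : X → β} (hf : Continuous f)
    (hg : Continuous g) {y : Y} {c : β} (hc : ∀ x ∈ S, f x = y → c < g x) {l : Filter ι}
    {u : ι → X} (hu : ∀ᶠ i in l, u i ∈ S) (hfu : Tendsto (f ∘ u) l (𝓝 y)) :
    ∀ᶠ i in l, c < g (u i) := by
  -- `f` maps the compact set `S ∩ {g ≤ c}` to a closed set avoiding `y`.
  have hK : IsCompact (S ∩ g ⁻¹' Iic c) := hS.inter_right (isClosed_Iic.preimage hg)
  have hy : (f '' (S ∩ g ⁻¹' Iic c))ᶜ ∈ 𝓝 y := by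
    refine (hK.image hf).isClosed.isOpen_compl.mem_nhds ?_
    rintro ⟨x, ⟨hxS, hxc⟩, hxy⟩
    exact (hc x hxS hxy).not_ge hxc
  filter_upwards [hu, hfu hy] with i hiS hiy
  by_contra! hic
  exact hiy ⟨u i, ⟨hiS, hic⟩, rfl⟩

lemma IsSelfAdjoint.sq_norm_add_ofReal_mul_I_smul_one_le [Nontrivial A] {x : A}
    (hx : IsSelfAdjoint x) (s : ℝ) : ‖x + ((s : ℂ) * I) • (1 : A)‖ ^ 2 ≤ ‖x‖ ^ 2 + s ^ 2 := by
  have hstar : star (x + ((s : ℂ) * I) • (1 : A)) = x - ((s : ℂ) * I) • 1 := by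
    simp [star_smul, hx.star_eq, sub_eq_add_neg]
  have hmul : (x - ((s : ℂ) * I) • (1 : A)) * (x + ((s : ℂ) * I) • 1) =
      x * x + (s ^ 2 : ℂ) • 1 := by
    have hI : (s : ℂ) * I * ((s : ℂ) * I) = -(s ^ 2 : ℂ) := by ring_nf; simp [I_sq]
    simp only [sub_mul, mul_add, smul_mul_assoc, mul_smul_comm, one_mul, mul_one, smul_sub,
      smul_smul, hI]
    module
  calc ‖x + ((s : ℂ) * I) • (1 : A)‖ ^ 2
      = ‖x * x + (s ^ 2 : ℂ) • (1 : A)‖ := by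
        rw [sq, ← CStarRing.norm_star_mul_self, hstar, hmul]
    _ ≤ ‖x * x‖ + ‖(s ^ 2 : ℂ) • (1 : A)‖ := norm_add_le _ _
    _ = ‖x‖ ^ 2 + s ^ 2 := by
        have hxx : ‖star x * x‖ = ‖x‖ * ‖x‖ := CStarRing.norm_star_mul_self
        rw [hx.star_eq] at hxx
        simp [hxx, norm_smul, sq]

namespace ContinuousLinearMap

variable {φ : A →L[ℂ] ℂ}

lemma im_apply_eq_zero_of_isSelfAdjoint_s12 [Nontrivial A] (hφ : ‖φ‖ ≤ 1) (h1 : φ 1 = 1) {x : A}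
    (hx : IsSelfAdjoint x) : (φ x).im = 0 := by
  have key : ∀ s : ℝ, s * (2 * (φ x).im) ≤ ‖x‖ ^ 2 - ‖φ x‖ ^ 2 := fun s => by
    have h := Complex.sq_norm_add_ofReal_mul (φ x) I s
    simp only [mul_I_re, conj_im, norm_I] at h
    have hle : ‖φ (x + ((s : ℂ) * I) • 1)‖ ^ 2 ≤ ‖x‖ ^ 2 + s ^ 2 :=
      (pow_le_pow_left₀ (norm_nonneg _) ((φ.le_of_opNorm_le hφ _).trans_eq (one_mul _)) 2).trans
        (hx.sq_norm_add_ofReal_mul_I_smul_one_le s)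
    rw [map_add, map_smul, h1, smul_eq_mul, mul_one, h] at hle
    linarith
  by_contra hne
  have := key ((‖x‖ ^ 2 - ‖φ x‖ ^ 2 + 1) / (2 * (φ x).im))
  rw [div_mul_cancel₀ _ (by simpa using hne)] at this
  linarith

lemma apply_star_mul_self_nonneg [Nontrivial A] (hφ : ‖φ‖ ≤ 1) (h1 : φ 1 = 1) (a : A) :
    0 ≤ φ (star a * a) := by
  let := CStarAlgebra.spectralOrder A
  have := CStarAlgebra.spectralOrderedRing A
  set x := star a * a
  have hx : 0 ≤ x := star_mul_self_nonneg a
  have him : (φ x).im = 0 := φ.im_apply_eq_zero_of_isSelfAdjoint_s12 hφ h1 (.of_nonneg hx)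
  -- `0 ≤ ‖x‖ • 1 - x ≤ ‖x‖ • 1` gives `|‖x‖ - φ x| ≤ ‖x‖`; as `φ x` is real, `φ x ≥ 0`.
  have hnorm : ‖algebraMap ℝ A ‖x‖ - x‖ ≤ ‖x‖ := by
    refine (CStarAlgebra.norm_le_norm_of_nonneg_of_le
      (sub_nonneg.2 IsSelfAdjoint.le_algebraMap_norm_self) (sub_le_self _ hx)).trans_eq ?_
    simp
  have hdisc : ‖(‖x‖ : ℂ) - φ x‖ ≤ ‖x‖ := by
    have h := (φ.le_opNorm (algebraMap ℝ A ‖x‖ - x)).trans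
      (mul_le_of_le_one_left (norm_nonneg _) hφ |>.trans hnorm)
    rwa [map_sub, Algebra.algebraMap_eq_smul_one, ← Complex.coe_smul, map_smul, h1,
      smul_eq_mul, mul_one] at h
  rw [← re_add_im (φ x), him, ofReal_zero, zero_mul, add_zero, ← ofReal_sub, norm_real,
    Real.norm_eq_abs, abs_le] at hdisc
  exact Complex.nonneg_iff.2 ⟨by linarith, him.symm⟩

lemma sq_norm_apply_add_smul (φ : A →L[ℂ] ℂ) (a b : A) (t : ℝ) :
    ‖φ (a + (t : ℂ) • b)‖ ^ 2 = ‖φ a‖ ^ 2 + 2 * t * (conj (φ a) * φ b).re + t ^ 2 * ‖φ b‖ ^ 2 := by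
  rw [map_add, map_smul, smul_eq_mul, Complex.sq_norm_add_ofReal_mul]

end ContinuousLinearMap

lemma isState_iff_norm_le_one [Nontrivial A] {φ : A →L[ℂ] ℂ} :
    IsState A φ ↔ φ 1 = 1 ∧ ‖φ‖ ≤ 1 := by
  refine ⟨fun h => ⟨h.2.1, h.2.2.le⟩, fun ⟨h1, hφ⟩ => ⟨φ.apply_star_mul_self_nonneg hφ h1, h1, ?_⟩⟩
  refine le_antisymm hφ ?_
  simpa [h1] using φ.le_opNorm 1

lemma exists_isState [Nontrivial A] : ∃ φ : A →L[ℂ] ℂ, IsState A φ := by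
  obtain ⟨φ, hφ, h1⟩ := exists_dual_vector ℂ (1 : A) (by simp)
  exact ⟨φ, isState_iff_norm_le_one.2 ⟨by simpa using h1, hφ.le⟩⟩

variable (A) in
def stateSpace : Set (WeakDual ℂ A) := {φ | IsState A (WeakDual.toStrongDual φ)}

lemma isCompact_stateSpace [Nontrivial A] : IsCompact (stateSpace A) := by
  have h : stateSpace A =
      WeakDual.toStrongDual ⁻¹' Metric.closedBall 0 1 ∩ {φ : WeakDual ℂ A | φ 1 = 1} := by
    ext φ
    simp [stateSpace, isState_iff_norm_le_one, and_comm]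
  rw [h]
  exact (WeakDual.isCompact_closedBall 0 1).inter_right
    (isClosed_eq (WeakDual.eval_continuous 1) continuous_const)

lemma WeakDual.continuous_re_conj_apply_mul_apply {E : Type*} [NormedAddCommGroup E]
    [NormedSpace ℂ E] (a b : E) : Continuous fun ψ : WeakDual ℂ E => (conj (ψ a) * ψ b).re :=
  continuous_re.comp ((WeakDual.eval_continuous a).star.mul (WeakDual.eval_continuous b))

namespace IsState

variable {φ : A →L[ℂ] ℂ}

lemma norm_apply_le_s12 (hφ : IsState A φ) (x : A) : ‖φ x‖ ≤ ‖x‖ := by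
  simpa [hφ.2.2] using φ.le_opNorm x

lemma norm_apply_le_nr_s12 (hφ : IsState A φ) (x : A) : ‖φ x‖ ≤ nr x :=
  le_csSup ⟨‖x‖, by rintro _ ⟨ψ, hψ, rfl⟩; exact hψ.norm_apply_le_s12 x⟩ ⟨φ, hφ, rfl⟩

end IsState

lemma exists_isState_norm_apply_eq_nr [Nontrivial A] (x : A) :
    ∃ φ : A →L[ℂ] ℂ, IsState A φ ∧ ‖φ x‖ = nr x := by
  obtain ⟨φ₀, hφ₀⟩ := exists_isState (A := A)
  obtain ⟨φ, hφ, hmax⟩ := isCompact_stateSpace.exists_isMaxOn ⟨φ₀, hφ₀⟩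
    (continuous_norm.comp (WeakDual.eval_continuous x)).continuousOn
  refine ⟨φ, hφ, le_antisymm (hφ.norm_apply_le_nr_s12 x) (csSup_le ⟨_, φ₀, hφ₀, rfl⟩ ?_)⟩
  rintro _ ⟨ψ, hψ, rfl⟩
  exact hmax (show ψ ∈ stateSpace A from hψ)

lemma nr_le_nr_add_norm_sub [Nontrivial A] (x y : A) : nr y ≤ nr x + ‖y - x‖ := by
  obtain ⟨φ, hφ, hφy⟩ := exists_isState_norm_apply_eq_nr y
  calc nr y = ‖φ x + φ (y - x)‖ := by rw [← map_add, add_sub_cancel, hφy]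
    _ ≤ nr x + ‖y - x‖ :=
      (norm_add_le _ _).trans (add_le_add (hφ.norm_apply_le_nr_s12 x) (hφ.norm_apply_le_s12 _))

section DiffQuot

variable {a b : A} {t : ℝ}

lemma diffQuot_nr_le {φ : A →L[ℂ] ℂ} (hφ : IsState A φ) (hφa : ‖φ a‖ = nr a) (ht : t < 0) :
    (nr (a + (t : ℂ) • b) ^ 2 - nr a ^ 2) / (2 * t) ≤ (conj (φ a) * φ b).re := by
  have h := pow_le_pow_left₀ (norm_nonneg _) (hφ.norm_apply_le_nr_s12 (a + (t : ℂ) • b)) 2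
  rw [φ.sq_norm_apply_add_smul a b t, hφa] at h
  rw [div_le_iff_of_neg (by linarith)]
  nlinarith [sq_nonneg t, sq_nonneg ‖φ b‖]

lemma le_diffQuot_nr {u : A →L[ℂ] ℂ} (hu : IsState A u)
    (hut : ‖u (a + (t : ℂ) • b)‖ = nr (a + (t : ℂ) • b)) (ht : t < 0) :
    (conj (u a) * u b).re + t / 2 * ‖b‖ ^ 2 ≤ (nr (a + (t : ℂ) • b) ^ 2 - nr a ^ 2) / (2 * t) := by
  have ha := pow_le_pow_left₀ (norm_nonneg _) (hu.norm_apply_le_nr_s12 a) 2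
  have hb := pow_le_pow_left₀ (norm_nonneg _) (hu.norm_apply_le_s12 b) 2
  have h := u.sq_norm_apply_add_smul a b t
  rw [hut] at h
  rw [le_div_iff_of_neg (by linarith)]
  nlinarith [sq_nonneg t]

end DiffQuot

section Nontrivial

variable [Nontrivial A]

lemma exists_isState_min_re_conj_mul (a b : A) :
    ∃ φ : A →L[ℂ] ℂ, IsState A φ ∧ ‖φ a‖ = nr a ∧
      ∀ ψ : A →L[ℂ] ℂ, IsState A ψ → ‖ψ a‖ = nr a →
        (conj (φ a) * φ b).re ≤ (conj (ψ a) * ψ b).re := by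
  obtain ⟨φ₀, hφ₀, hφ₀a⟩ := exists_isState_norm_apply_eq_nr a
  have hM : IsCompact (stateSpace A ∩ {ψ | ‖ψ a‖ = nr a}) :=
    isCompact_stateSpace.inter_right
      (isClosed_eq (continuous_norm.comp (WeakDual.eval_continuous a)) continuous_const)
  obtain ⟨φ, ⟨hφ, hφa⟩, hmin⟩ := hM.exists_isMinOn ⟨φ₀, hφ₀, hφ₀a⟩
    (WeakDual.continuous_re_conj_apply_mul_apply a b).continuousOn
  exact ⟨φ, hφ, hφa, fun ψ hψ hψa => hmin (show ψ ∈ _ from ⟨hψ, hψa⟩)⟩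

lemma tendsto_norm_apply_of_norm_apply_add_smul_eq_nr {a b : A} {u : ℝ → A →L[ℂ] ℂ}
    (hu : ∀ t, IsState A (u t)) (hut : ∀ t : ℝ, ‖u t (a + (t : ℂ) • b)‖ = nr (a + (t : ℂ) • b)) :
    Tendsto (fun t => ‖u t a‖) (𝓝 0) (𝓝 (nr a)) := by
  have hlow : ∀ t : ℝ, nr a - 2 * ‖(t : ℂ) • b‖ ≤ ‖u t a‖ := fun t => by
    have h1 := nr_le_nr_add_norm_sub (a + (t : ℂ) • b) a
    have h2 : ‖u t (a + (t : ℂ) • b)‖ ≤ ‖u t a‖ + ‖(t : ℂ) • b‖ := by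
      rw [map_add]
      exact (norm_add_le _ _).trans (add_le_add le_rfl ((hu t).norm_apply_le_s12 _))
    rw [sub_add_cancel_left, norm_neg] at h1
    linarith [hut t]
  have hlim : Tendsto (fun t : ℝ => nr a - 2 * ‖(t : ℂ) • b‖) (𝓝 0) (𝓝 (nr a)) := by
    have : Continuous fun t : ℝ => nr a - 2 * ‖(t : ℂ) • b‖ := by fun_prop
    simpa using this.tendsto 0
  exact tendsto_of_tendsto_of_tendsto_of_le_of_le hlim tendsto_const_nhds hlow
    fun t => (hu t).norm_apply_le_nr_s12 a

lemma eventually_lt_diffQuot_nr {a b : A} {m c : ℝ}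
    (hm : ∀ ψ : A →L[ℂ] ℂ, IsState A ψ → ‖ψ a‖ = nr a → m ≤ (conj (ψ a) * ψ b).re)
    (hc : c < m) :
    ∀ᶠ t : ℝ in 𝓝[<] 0, c < (nr (a + (t : ℂ) • b) ^ 2 - nr a ^ 2) / (2 * t) := by
  choose u hu hut using fun t : ℝ => exists_isState_norm_apply_eq_nr (a + (t : ℂ) • b)
  obtain ⟨c', hcc', hc'm⟩ := exists_between hc
  have hR : ∀ᶠ t in 𝓝[<] 0, c' < (conj (u t a) * u t b).re :=
    isCompact_stateSpace.eventually_lt_of_tendsto (f := fun ψ : WeakDual ℂ A => ‖ψ a‖)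
      (continuous_norm.comp (WeakDual.eval_continuous a))
      (WeakDual.continuous_re_conj_apply_mul_apply a b)
      (fun ψ hψ hψa => hc'm.trans_le (hm _ hψ hψa)) (u := fun t => StrongDual.toWeakDual (u t))
      (.of_forall hu)
      ((tendsto_norm_apply_of_norm_apply_add_smul_eq_nr hu hut).mono_left nhdsWithin_le_nhds)
  have hsmall : ∀ᶠ t in 𝓝[<] (0 : ℝ), c - c' < t / 2 * ‖b‖ ^ 2 := by
    have h0 : Tendsto (fun t : ℝ => t / 2 * ‖b‖ ^ 2) (𝓝[<] 0) (𝓝 0) := by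
      have : Continuous fun t : ℝ => t / 2 * ‖b‖ ^ 2 := by fun_prop
      simpa using (this.tendsto 0).mono_left nhdsWithin_le_nhds
    exact h0.eventually (lt_mem_nhds (by linarith))
  filter_upwards [hR, hsmall, self_mem_nhdsWithin] with t hRt hst ht
  linarith [le_diffQuot_nr (hu t) (hut t) ht]

end Nontrivial

theorem stmt12_general (a b : A) (ha : a ≠ 0) :
    ∃ φ : A →L[ℂ] ℂ, IsState A φ ∧ ‖φ a‖ = nr a ∧
      (∀ ψ : A →L[ℂ] ℂ, IsState A ψ → ‖ψ a‖ = nr a →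
        ((starRingEnd ℂ) (φ a) * φ b).re ≤ ((starRingEnd ℂ) (ψ a) * ψ b).re) ∧
      Filter.Tendsto (fun t : ℝ => (nr (a + (t : ℂ) • b) ^ 2 - nr a ^ 2) / (2 * t))
        (nhdsWithin 0 (Set.Iio 0)) (nhds (((starRingEnd ℂ) (φ a) * φ b).re)) := by
  have : Nontrivial A := ⟨a, 0, ha⟩
  obtain ⟨φ, hφ, hφa, hmin⟩ := exists_isState_min_re_conj_mul a b
  refine ⟨φ, hφ, hφa, hmin, tendsto_order.2 ⟨fun c hc => eventually_lt_diffQuot_nr hmin hc,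
    fun c hc => ?_⟩⟩
  filter_upwards [self_mem_nhdsWithin] with t ht
  exact (diffQuot_nr_le hφ hφa ht).trans_lt hc

theorem stmt12 (a b : A) (ha : a ≠ 0) (hb : b ≠ 0) :
    ∃ φ : A →L[ℂ] ℂ, IsState A φ ∧ ‖φ a‖ = nr a ∧
      (∀ ψ : A →L[ℂ] ℂ, IsState A ψ → ‖ψ a‖ = nr a →
        ((starRingEnd ℂ) (φ a) * φ b).re ≤ ((starRingEnd ℂ) (ψ a) * ψ b).re) ∧
      Filter.Tendsto (fun t : ℝ => (nr (a + (t : ℂ) • b) ^ 2 - nr a ^ 2) / (2 * t))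
        (nhdsWithin 0 (Set.Iio 0)) (nhds (((starRingEnd ℂ) (φ a) * φ b).re)) :=
  stmt12_general a b ha
end
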